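/- Pohozaev–Pucci–Serrin identity for the bilaplacian (case k = 2): let n > 4, Ω ⊂ ℝⁿ a smooth bounded domain, u ∈ C⁵(ℝⁿ), f ∈ C¹ with compact support, and ε ∈ [0, 2*-2) where 2* = 2n/(n-4). Set T(u) = ((n-4)/2)u + x·∇u. Then ∫_Ω (Δ²u - f|u|^{2*-2-ε}u)·T(u) dx = (nε/(2*(2*-ε)))∫_Ω f|u|^{2*-ε} dx + (1/(2*-ε))∫_Ω (∇f, x)|u|^{2*-ε} dx + ∫_{∂Ω} [ (x,ν)·( (Δu)²/2 - f|u|^{2*-ε}/(2*-ε) ) + ( -∂_ν Δu·T(u) + Δu·∂_ν T(u) ) ] dσ. -/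

import Mathlib

open MeasureTheory Real
open scoped RealInnerProductSpace

/-- Partial derivative in the `i`-th coordinate direction on `ℝⁿ`. -/
noncomputable def pd {n : ℕ} (i : Fin n) (f : EuclideanSpace ℝ (Fin n) → ℝ) :
    EuclideanSpace ℝ (Fin n) → ℝ :=
  fun x => fderiv ℝ f x (EuclideanSpace.single i 1)

/-- The Euclidean Laplacian with the minus-sign convention `Δu = -∑ᵢ ∂ᵢᵢ u`. -/
noncomputable def lap {n : ℕ} (f : EuclideanSpace ℝ (Fin n) → ℝ) :
    EuclideanSpace ℝ (Fin n) → ℝ :=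
  fun x => -∑ i, pd i (pd i f) x

/-- The critical Sobolev exponent `2* = 2n/(n-4)` for `k = 2`. -/
noncomputable def twoStar (n : ℕ) : ℝ := 2 * (n : ℝ) / ((n : ℝ) - 4)

/-- The Pohozaev multiplier `T(u) = ((n-4)/2) u + x·∇u`. -/
noncomputable def Tfun (n : ℕ) (u : EuclideanSpace ℝ (Fin n) → ℝ) :
    EuclideanSpace ℝ (Fin n) → ℝ :=
  fun x => (((n : ℝ) - 4) / 2) * u x + fderiv ℝ u x x

section PPSaux

variable {n : ℕ}

lemma pps_fderiv_eq_sum (g : EuclideanSpace ℝ (Fin n) → ℝ) (x v : EuclideanSpace ℝ (Fin n)) :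
    fderiv ℝ g x v = ∑ j, v j * pd j g x := by
  have hv : v = ∑ j, v j • EuclideanSpace.single j (1:ℝ) := by
    ext i
    rw [WithLp.ofLp_sum, Finset.sum_apply]
    simp [EuclideanSpace.single_apply]
  conv_lhs => rw [hv]
  rw [map_sum]
  simp [pd]

lemma pps_contDiff_pd {m N : WithTop ℕ∞} {g : EuclideanSpace ℝ (Fin n) → ℝ} (i : Fin n)
    (hg : ContDiff ℝ N g) (hm : m + 1 ≤ N) : ContDiff ℝ m (pd i g) := by
  exact (ContinuousLinearMap.apply ℝ ℝ (EuclideanSpace.single i 1)).contDiff.comp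
    (hg.fderiv_right hm)

lemma pps_pd_diff {N : WithTop ℕ∞} {g : EuclideanSpace ℝ (Fin n) → ℝ} (i : Fin n)
    (hg : ContDiff ℝ N g) (hm : 1 + 1 ≤ N) : Differentiable ℝ (pd i g) :=
  (pps_contDiff_pd i hg hm).differentiable one_ne_zero

lemma pd_mul {g h : EuclideanSpace ℝ (Fin n) → ℝ} {x : EuclideanSpace ℝ (Fin n)} (i : Fin n)
    (hg : DifferentiableAt ℝ g x) (hh : DifferentiableAt ℝ h x) :
    pd i (fun y => g y * h y) x = pd i g x * h x + g x * pd i h x := by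
  simp [pd, fderiv_fun_mul hg hh]; ring

lemma pd_add {g h : EuclideanSpace ℝ (Fin n) → ℝ} {x : EuclideanSpace ℝ (Fin n)} (i : Fin n)
    (hg : DifferentiableAt ℝ g x) (hh : DifferentiableAt ℝ h x) :
    pd i (fun y => g y + h y) x = pd i g x + pd i h x := by
  simp [pd, fderiv_fun_add hg hh]

lemma pd_sub {g h : EuclideanSpace ℝ (Fin n) → ℝ} {x : EuclideanSpace ℝ (Fin n)} (i : Fin n)
    (hg : DifferentiableAt ℝ g x) (hh : DifferentiableAt ℝ h x) :
    pd i (fun y => g y - h y) x = pd i g x - pd i h x := by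
  simp [pd, fderiv_fun_sub hg hh]

lemma pd_const_mul {g : EuclideanSpace ℝ (Fin n) → ℝ} {x : EuclideanSpace ℝ (Fin n)} (i : Fin n)
    (c : ℝ) (hg : DifferentiableAt ℝ g x) :
    pd i (fun y => c * g y) x = c * pd i g x := by
  simp [pd, fderiv_const_mul hg]

lemma pd_neg {g : EuclideanSpace ℝ (Fin n) → ℝ} {x : EuclideanSpace ℝ (Fin n)} (i : Fin n) :
    pd i (fun y => -(g y)) x = -pd i g x := by
  simp [pd, fderiv_neg]

lemma pd_sum {ι : Type*} (s : Finset ι) {g : ι → EuclideanSpace ℝ (Fin n) → ℝ}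
    {x : EuclideanSpace ℝ (Fin n)} (i : Fin n)
    (hg : ∀ j ∈ s, DifferentiableAt ℝ (g j) x) :
    pd i (fun y => ∑ j ∈ s, g j y) x = ∑ j ∈ s, pd i (g j) x := by
  simp [pd, fderiv_fun_sum hg]

lemma pd_coord {x : EuclideanSpace ℝ (Fin n)} (i j : Fin n) :
    pd i (fun y : EuclideanSpace ℝ (Fin n) => y j) x = if j = i then 1 else 0 := by
  have : (fun y : EuclideanSpace ℝ (Fin n) => y j)
      = (EuclideanSpace.proj j : EuclideanSpace ℝ (Fin n) →L[ℝ] ℝ) := rfl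
  rw [this, pd]
  simp only [ContinuousLinearMap.fderiv]
  simp [EuclideanSpace.single_apply]

lemma pps_contDiff_coord (m : WithTop ℕ∞) (j : Fin n) :
    ContDiff ℝ m (fun y : EuclideanSpace ℝ (Fin n) => y j) :=
  (EuclideanSpace.proj j : EuclideanSpace ℝ (Fin n) →L[ℝ] ℝ).contDiff

lemma pd_comm {g : EuclideanSpace ℝ (Fin n) → ℝ} {x : EuclideanSpace ℝ (Fin n)} (i j : Fin n)
    (hg : ContDiff ℝ 2 g) : pd i (pd j g) x = pd j (pd i g) x := by
  have hsym : IsSymmSndFDerivAt ℝ g x := hg.contDiffAt.isSymmSndFDerivAt (by simp)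
  have key : ∀ a b : Fin n, pd a (pd b g) x
      = fderiv ℝ (fderiv ℝ g) x (EuclideanSpace.single a 1) (EuclideanSpace.single b 1) := by
    intro a b
    have hdg : DifferentiableAt ℝ (fderiv ℝ g) x :=
      (hg.fderiv_right (by norm_num : (1:WithTop ℕ∞) + 1 ≤ 2)).differentiable one_ne_zero x
    have he : pd b g = fun y => (fderiv ℝ g y) (EuclideanSpace.single b 1) := rfl
    rw [pd, he, fderiv_clm_apply hdg (differentiableAt_const _)]
    simp
  rw [key i j, key j i, hsym]

lemma pd_abs_rpow {u : EuclideanSpace ℝ (Fin n) → ℝ} {x : EuclideanSpace ℝ (Fin n)}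
    (hu : DifferentiableAt ℝ u x) {q : ℝ} (hq : 1 < q) (i : Fin n) :
    pd i (fun y => |u y| ^ q) x = q * |u x| ^ (q - 2) * u x * pd i u x := by
  have h1 : HasDerivAt (fun t : ℝ => |t| ^ q) (q * |u x| ^ (q - 2) * u x) (u x) :=
    hasDerivAt_abs_rpow (u x) hq
  have h2 : HasFDerivAt (fun y => |u y| ^ q) ((q * |u x| ^ (q - 2) * u x) • fderiv ℝ u x) x :=
    h1.comp_hasFDerivAt x hu.hasFDerivAt
  rw [pd, h2.fderiv]
  simp [pd, mul_comm]

lemma pps_contDiff_abs_rpow {u : EuclideanSpace ℝ (Fin n) → ℝ} (hu : ContDiff ℝ 1 u)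
    {q : ℝ} (hq : 1 < q) : ContDiff ℝ 1 (fun y => |u y| ^ q) := by
  simpa [Real.norm_eq_abs] using hu.norm_rpow hq

lemma pd_proj {F : EuclideanSpace ℝ (Fin n) → EuclideanSpace ℝ (Fin n)}
    {x : EuclideanSpace ℝ (Fin n)} (hF : DifferentiableAt ℝ F x) (i : Fin n)
    (v : EuclideanSpace ℝ (Fin n)) :
    fderiv ℝ (fun y => F y i) x v = (fderiv ℝ F x v) i := by
  have h : (fun y => F y i)
      = (EuclideanSpace.proj i : EuclideanSpace ℝ (Fin n) →L[ℝ] ℝ) ∘ F := rfl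
  rw [h, fderiv_comp x (EuclideanSpace.proj i).differentiableAt hF, ContinuousLinearMap.fderiv]
  simp

end PPSaux
/-- Coordinate form of the Pohozaev multiplier. -/
noncomputable def ppsTu (n : ℕ) (u : EuclideanSpace ℝ (Fin n) → ℝ) :
    EuclideanSpace ℝ (Fin n) → ℝ :=
  fun y => (((n : ℝ) - 4) / 2) * u y + ∑ j, y j * pd j u y

/-- The scalar potential in the Pohozaev vector field. -/
noncomputable def ppsG (n : ℕ) (u f : EuclideanSpace ℝ (Fin n) → ℝ) (q : ℝ) :
    EuclideanSpace ℝ (Fin n) → ℝ :=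
  fun y => (1/2) * (lap u y * lap u y) - (1/q) * (f y * |u y| ^ q)

/-- The Pohozaev vector field. -/
noncomputable def ppsF (n : ℕ) (u f : EuclideanSpace ℝ (Fin n) → ℝ) (q : ℝ) :
    EuclideanSpace ℝ (Fin n) → EuclideanSpace ℝ (Fin n) :=
  fun x => (WithLp.equiv 2 (Fin n → ℝ)).symm (fun j =>
    x j * ppsG n u f q x - pd j (lap u) x * ppsTu n u x + lap u x * pd j (ppsTu n u) x)

section PPSsmooth

variable {n : ℕ} {u f : EuclideanSpace ℝ (Fin n) → ℝ} {q : ℝ}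

lemma pps_lap_smooth (hu : ContDiff ℝ 5 u) : ContDiff ℝ 3 (lap u) := by
  have h : lap u = fun x => -∑ i, pd i (pd i u) x := rfl
  rw [h]
  exact (ContDiff.sum fun i _ =>
    pps_contDiff_pd i (pps_contDiff_pd (m := 4) i hu (by norm_num)) (by norm_num)).neg

lemma pps_Tu_smooth (hu : ContDiff ℝ 5 u) : ContDiff ℝ 4 (ppsTu n u) := by
  have h : ppsTu n u = fun y => (((n : ℝ) - 4) / 2) * u y + ∑ j, y j * pd j u y := rfl
  rw [h]
  refine (contDiff_const.mul (hu.of_le (by norm_num))).add (ContDiff.sum fun j _ => ?_)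
  exact (pps_contDiff_coord 4 j).mul (pps_contDiff_pd j hu (by norm_num))

lemma pps_G_smooth (hu : ContDiff ℝ 5 u) (hf : ContDiff ℝ 1 f) (hq : 1 < q) :
    ContDiff ℝ 1 (ppsG n u f q) := by
  have hL : ContDiff ℝ 3 (lap u) := pps_lap_smooth hu
  have hL1 : ContDiff ℝ 1 (lap u) := hL.of_le (by norm_num)
  have h : ppsG n u f q = fun y => (1/2) * (lap u y * lap u y) - (1/q) * (f y * |u y| ^ q) := rfl
  rw [h]
  refine (contDiff_const.mul (hL1.mul hL1)).sub (contDiff_const.mul (hf.mul ?_))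
  exact pps_contDiff_abs_rpow (hu.of_le (by norm_num)) hq

lemma pps_F_smooth (hu : ContDiff ℝ 5 u) (hf : ContDiff ℝ 1 f) (hq : 1 < q) :
    ContDiff ℝ 1 (ppsF n u f q) := by
  have hL : ContDiff ℝ 3 (lap u) := pps_lap_smooth hu
  have hT : ContDiff ℝ 4 (ppsTu n u) := pps_Tu_smooth hu
  have hcomp : ∀ j : Fin n, ContDiff ℝ 1 (fun x =>
      x j * ppsG n u f q x - pd j (lap u) x * ppsTu n u x + lap u x * pd j (ppsTu n u) x) := by
    intro j
    refine (((pps_contDiff_coord 1 j).mul (pps_G_smooth hu hf hq)).sub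
      ((pps_contDiff_pd j hL (by norm_num)).mul (hT.of_le (by norm_num)))).add
      ((hL.of_le (by norm_num)).mul (pps_contDiff_pd j hT (by norm_num)))
  have h : ppsF n u f q = (PiLp.continuousLinearEquiv 2 ℝ (fun _ : Fin n => ℝ)).symm ∘
      (fun x j => x j * ppsG n u f q x - pd j (lap u) x * ppsTu n u x
        + lap u x * pd j (ppsTu n u) x) := rfl
  rw [h]
  exact ((PiLp.continuousLinearEquiv 2 ℝ (fun _ : Fin n => ℝ)).symm :
    (∀ _ : Fin n, ℝ) →L[ℝ] EuclideanSpace ℝ (Fin n)).contDiff.comp (contDiff_pi.2 hcomp)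

end PPSsmooth
section PPScalc

variable {n : ℕ} {u f : EuclideanSpace ℝ (Fin n) → ℝ} {q : ℝ}

lemma pps_pdG (hu : ContDiff ℝ 5 u) (hf : ContDiff ℝ 1 f) (hq : 1 < q) (hq0 : q ≠ 0)
    (i : Fin n) (x : EuclideanSpace ℝ (Fin n)) :
    pd i (ppsG n u f q) x = lap u x * pd i (lap u) x
      - (1/q) * (pd i f x * |u x| ^ q) - f x * (|u x| ^ (q-2) * u x * pd i u x) := by
  have hL : ContDiff ℝ 3 (lap u) := pps_lap_smooth hu
  have hdL : DifferentiableAt ℝ (lap u) x := (hL.differentiable (by norm_num)).differentiableAt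
  have hdw : DifferentiableAt ℝ (fun y => |u y| ^ q) x :=
    ((pps_contDiff_abs_rpow (hu.of_le (by norm_num)) hq).differentiable one_ne_zero).differentiableAt
  have hdf : DifferentiableAt ℝ f x := (hf.differentiable one_ne_zero).differentiableAt
  have hdu : DifferentiableAt ℝ u x := (hu.differentiable (by norm_num)).differentiableAt
  have h : ppsG n u f q = fun y => (1/2) * (lap u y * lap u y) - (1/q) * (f y * |u y| ^ q) := rfl
  rw [h, pd_sub i ((hdL.fun_mul hdL).const_mul (1/2)) ((hdf.fun_mul hdw).const_mul (1/q)),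
    pd_const_mul i _ (hdL.fun_mul hdL), pd_mul i hdL hdL,
    pd_const_mul i _ (hdf.fun_mul hdw), pd_mul i hdf hdw, pd_abs_rpow hdu hq i]
  field_simp
  ring

lemma pps_pdTu (hu : ContDiff ℝ 5 u) (i : Fin n) (x : EuclideanSpace ℝ (Fin n)) :
    pd i (ppsTu n u) x
      = (((n:ℝ)-4)/2 + 1) * pd i u x + ∑ j, x j * pd i (pd j u) x := by
  have hdu : DifferentiableAt ℝ u x := (hu.differentiable (by norm_num)).differentiableAt
  have hdpd : ∀ j : Fin n, DifferentiableAt ℝ (pd j u) x := fun j =>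
    (pps_pd_diff j hu (by norm_num)) x
  have hdc : ∀ j : Fin n, DifferentiableAt ℝ (fun z : EuclideanSpace ℝ (Fin n) => z j) x :=
    fun j => ((pps_contDiff_coord 1 j).differentiable one_ne_zero).differentiableAt
  have h : ppsTu n u = fun y => (((n:ℝ)-4)/2) * u y + ∑ j, (fun z => z j * pd j u z) y := rfl
  rw [h, pd_add i (hdu.const_mul _) (DifferentiableAt.fun_sum fun j _ => (hdc j).fun_mul (hdpd j)),
    pd_const_mul i _ hdu, pd_sum Finset.univ i (fun j _ => (hdc j).fun_mul (hdpd j))]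
  have hterm : ∀ j : Fin n, pd i (fun z => z j * pd j u z) x
      = (if j = i then 1 else 0) * pd j u x + x j * pd i (pd j u) x := by
    intro j
    rw [pd_mul i (hdc j) (hdpd j), pd_coord]
  rw [Finset.sum_congr rfl fun j _ => hterm j, Finset.sum_add_distrib]
  simp only [ite_mul, one_mul, zero_mul, Finset.sum_ite_eq', Finset.mem_univ, if_true]
  ring

lemma pps_pd2Tu (hu : ContDiff ℝ 5 u) (i : Fin n) (x : EuclideanSpace ℝ (Fin n)) :
    pd i (pd i (ppsTu n u)) x
      = (((n:ℝ)-4)/2 + 1) * pd i (pd i u) x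
        + (pd i (pd i u) x + ∑ j, x j * pd i (pd i (pd j u)) x) := by
  have hdpd : ∀ j : Fin n, DifferentiableAt ℝ (pd j u) x := fun j =>
    (pps_pd_diff j hu (by norm_num)) x
  have hd2 : ∀ j : Fin n, DifferentiableAt ℝ (pd i (pd j u)) x := fun j =>
    (pps_pd_diff i (pps_contDiff_pd (m := 4) j hu (by norm_num)) (by norm_num)) x
  have hdc : ∀ j : Fin n, DifferentiableAt ℝ (fun z : EuclideanSpace ℝ (Fin n) => z j) x :=
    fun j => ((pps_contDiff_coord 1 j).differentiable one_ne_zero).differentiableAt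
  have h : pd i (ppsTu n u)
      = fun y => (((n:ℝ)-4)/2 + 1) * pd i u y + ∑ j, (fun z => z j * pd i (pd j u) z) y :=
    funext fun y => pps_pdTu hu i y
  rw [h, pd_add i ((hdpd i).const_mul _) (DifferentiableAt.fun_sum fun j _ => (hdc j).fun_mul (hd2 j)),
    pd_const_mul i _ (hdpd i), pd_sum Finset.univ i (fun j _ => (hdc j).fun_mul (hd2 j))]
  have hterm : ∀ j : Fin n, pd i (fun z => z j * pd i (pd j u) z) x
      = (if j = i then 1 else 0) * pd i (pd j u) x + x j * pd i (pd i (pd j u)) x := by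
    intro j
    rw [pd_mul i (hdc j) (hd2 j), pd_coord]
  rw [Finset.sum_congr rfl fun j _ => hterm j, Finset.sum_add_distrib]
  simp only [ite_mul, one_mul, zero_mul, Finset.sum_ite_eq', Finset.mem_univ, if_true]

lemma pps_sum_third (hu : ContDiff ℝ 5 u) (j : Fin n) (x : EuclideanSpace ℝ (Fin n)) :
    ∑ i, pd i (pd i (pd j u)) x = - pd j (lap u) x := by
  have hu2 : ContDiff ℝ 2 u := hu.of_le (by norm_num)
  have step1 : ∀ i : Fin n, pd i (pd i (pd j u)) x = pd j (pd i (pd i u)) x := by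
    intro i
    have e1 : pd i (pd j u) = pd j (pd i u) := funext fun z => pd_comm i j hu2
    rw [e1]
    exact pd_comm i j ((pps_contDiff_pd (m := 2) i hu (by norm_num)))
  rw [Finset.sum_congr rfl fun i _ => step1 i]
  have e2 : (fun z => ∑ i, pd i (pd i u) z)
      = fun z => -(lap u z) := by
    funext z; simp [lap]
  calc ∑ i, pd j (pd i (pd i u)) x
      = pd j (fun z => ∑ i, pd i (pd i u) z) x :=
        (pd_sum Finset.univ j fun i _ =>
          (pps_pd_diff i (pps_contDiff_pd (m := 4) i hu (by norm_num)) (by norm_num)) x).symm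
    _ = - pd j (lap u) x := by rw [e2, pd_neg]

lemma pps_F_div (hu : ContDiff ℝ 5 u) (hf : ContDiff ℝ 1 f) (hq : 1 < q) (hq0 : q ≠ 0)
    (x : EuclideanSpace ℝ (Fin n)) :
    ∑ i, pd i (fun y => ppsF n u f q y i) x
      = lap (lap u) x * ppsTu n u x
        - ((n:ℝ)/q) * (f x * |u x| ^ q)
        - (1/q) * ((∑ j, x j * pd j f x) * |u x| ^ q)
        - f x * (|u x| ^ (q-2) * u x * (∑ j, x j * pd j u x)) := by
  have hL : ContDiff ℝ 3 (lap u) := pps_lap_smooth hu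
  have hT : ContDiff ℝ 4 (ppsTu n u) := pps_Tu_smooth hu
  have hG : ContDiff ℝ 1 (ppsG n u f q) := pps_G_smooth hu hf hq
  have hdL : DifferentiableAt ℝ (lap u) x := (hL.differentiable (by norm_num)).differentiableAt
  have hdpdL : ∀ j : Fin n, DifferentiableAt ℝ (pd j (lap u)) x := fun j =>
    (pps_pd_diff j hL (by norm_num)) x
  have hdT : DifferentiableAt ℝ (ppsTu n u) x := (hT.differentiable (by norm_num)).differentiableAt
  have hdpdT : ∀ j : Fin n, DifferentiableAt ℝ (pd j (ppsTu n u)) x := fun j =>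
    (pps_pd_diff j hT (by norm_num)) x
  have hdG : DifferentiableAt ℝ (ppsG n u f q) x := (hG.differentiable one_ne_zero).differentiableAt
  have hdc : ∀ j : Fin n, DifferentiableAt ℝ (fun z : EuclideanSpace ℝ (Fin n) => z j) x :=
    fun j => ((pps_contDiff_coord 1 j).differentiable one_ne_zero).differentiableAt
  have pdFi : ∀ i : Fin n, pd i (fun y => ppsF n u f q y i) x
      = ppsG n u f q x + x i * pd i (ppsG n u f q) x
        - pd i (pd i (lap u)) x * ppsTu n u x
        + lap u x * pd i (pd i (ppsTu n u)) x := by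
    intro i
    have e1 : (fun y => ppsF n u f q y i)
        = fun y => (y i * ppsG n u f q y - pd i (lap u) y * ppsTu n u y)
            + lap u y * pd i (ppsTu n u) y := rfl
    rw [e1, pd_add i (((hdc i).fun_mul hdG).fun_sub ((hdpdL i).fun_mul hdT)) (hdL.fun_mul (hdpdT i)),
      pd_sub i ((hdc i).fun_mul hdG) ((hdpdL i).fun_mul hdT),
      pd_mul i (hdc i) hdG, pd_mul i (hdpdL i) hdT, pd_mul i hdL (hdpdT i), pd_coord]
    norm_num
    ring
  rw [Finset.sum_congr rfl fun i _ => pdFi i]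
  have hsum : ∑ i, (ppsG n u f q x + x i * pd i (ppsG n u f q) x
        - pd i (pd i (lap u)) x * ppsTu n u x
        + lap u x * pd i (pd i (ppsTu n u)) x)
      = (n:ℝ) * ppsG n u f q x + (∑ i, x i * pd i (ppsG n u f q) x)
        - (∑ i, pd i (pd i (lap u)) x) * ppsTu n u x
        + lap u x * (∑ i, pd i (pd i (ppsTu n u)) x) := by
    rw [Finset.sum_add_distrib, Finset.sum_sub_distrib, Finset.sum_add_distrib,
      Finset.sum_mul, ← Finset.mul_sum, Finset.sum_const, Finset.card_univ,
      Fintype.card_fin, nsmul_eq_mul]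
  rw [hsum]
  have hsub1 : ∑ i, x i * pd i (ppsG n u f q) x
      = lap u x * (∑ i, x i * pd i (lap u) x)
        - (1/q) * ((∑ j, x j * pd j f x) * |u x| ^ q)
        - f x * (|u x| ^ (q-2) * u x * (∑ j, x j * pd j u x)) := by
    calc ∑ i, x i * pd i (ppsG n u f q) x
        = ∑ i, (lap u x * (x i * pd i (lap u) x)
            - (1/q) * ((x i * pd i f x) * |u x| ^ q)
            - f x * (|u x| ^ (q-2) * u x * (x i * pd i u x))) :=
          Finset.sum_congr rfl fun i _ => by rw [pps_pdG hu hf hq hq0 i x]; ring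
      _ = _ := by
          rw [Finset.sum_sub_distrib, Finset.sum_sub_distrib, ← Finset.mul_sum,
            ← Finset.mul_sum, ← Finset.sum_mul, ← Finset.mul_sum, ← Finset.mul_sum]
  have hsub2 : ∑ i, pd i (pd i (ppsTu n u)) x
      = (((n:ℝ)-4)/2 + 2) * (∑ i, pd i (pd i u) x) - ∑ j, x j * pd j (lap u) x := by
    have h3 : ∀ j : Fin n, ∑ i, x j * pd i (pd i (pd j u)) x = -(x j * pd j (lap u) x) := by
      intro j; rw [← Finset.mul_sum, pps_sum_third hu j x]; ring
    calc ∑ i, pd i (pd i (ppsTu n u)) x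
        = ∑ i, ((((n:ℝ)-4)/2 + 1) * pd i (pd i u) x
            + (pd i (pd i u) x + ∑ j, x j * pd i (pd i (pd j u)) x)) :=
          Finset.sum_congr rfl fun i _ => pps_pd2Tu hu i x
      _ = (((n:ℝ)-4)/2 + 1) * (∑ i, pd i (pd i u) x)
            + ((∑ i, pd i (pd i u) x) + ∑ i, ∑ j, x j * pd i (pd i (pd j u)) x) := by
          rw [Finset.sum_add_distrib, Finset.sum_add_distrib, ← Finset.mul_sum]
      _ = _ := by
          rw [Finset.sum_comm, Finset.sum_congr rfl fun j _ => h3 j, Finset.sum_neg_distrib]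
          ring
  rw [hsub1, hsub2]
  have hGx : ppsG n u f q x
      = (1/2) * (lap u x * lap u x) - (1/q) * (f x * |u x| ^ q) := rfl
  have hb : lap (lap u) x = - ∑ i, pd i (pd i (lap u)) x := rfl
  have hS2 : (∑ i, pd i (pd i u) x) = - lap u x := by simp [lap]
  rw [hGx, hb, hS2]
  ring

lemma pps_F_inner (x v : EuclideanSpace ℝ (Fin n)) :
    (inner ℝ (ppsF n u f q x) v : ℝ)
      = (inner ℝ x v : ℝ) * ((lap u x) ^ 2 / 2 - f x * |u x| ^ q / q)
        + (-(fderiv ℝ (lap u) x v) * ppsTu n u x + lap u x * fderiv ℝ (ppsTu n u) x v) := by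
  rw [PiLp.inner_apply, PiLp.inner_apply]
  simp only [Real.inner_apply]
  rw [pps_fderiv_eq_sum (lap u) x v, pps_fderiv_eq_sum (ppsTu n u) x v]
  have hGx : ppsG n u f q x
      = (1/2) * (lap u x * lap u x) - (1/q) * (f x * |u x| ^ q) := rfl
  calc ∑ i, ppsF n u f q x i * v i
      = ∑ i, ((x i * v i) * ((lap u x) ^ 2 / 2 - f x * |u x| ^ q / q)
          + ((v i * pd i (lap u) x) * (-(ppsTu n u x))
            + (v i * pd i (ppsTu n u) x) * lap u x)) := by
        refine Finset.sum_congr rfl fun i _ => ?_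
        have hFx : ppsF n u f q x i
            = x i * ppsG n u f q x - pd i (lap u) x * ppsTu n u x
              + lap u x * pd i (ppsTu n u) x := rfl
        rw [hFx, hGx]; ring
    _ = (∑ i, x i * v i) * ((lap u x) ^ 2 / 2 - f x * |u x| ^ q / q)
          + ((∑ i, v i * pd i (lap u) x) * (-(ppsTu n u x))
            + (∑ i, v i * pd i (ppsTu n u) x) * lap u x) := by
        rw [Finset.sum_add_distrib, Finset.sum_add_distrib, Finset.sum_mul,
          Finset.sum_mul, Finset.sum_mul]
    _ = _ := by ring

end PPScalc

/-- Pohozaev–Pucci–Serrin identity for the bilaplacian (`k = 2`): for `n > 4`,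
a smooth bounded domain `Ω ⊂ ℝⁿ` (encoded by its outward unit normal `ν` and surface
measure `σ` on `∂Ω`, subject to the divergence theorem), `u ∈ C⁵`, `f ∈ C¹` with
compact support, and `ε ∈ [0, 2*-2)`,
`∫_Ω (Δ²u - f|u|^{2*-2-ε}u) T(u) = (nε/(2*(2*-ε))) ∫_Ω f|u|^{2*-ε}
  + (1/(2*-ε)) ∫_Ω (∇f,x)|u|^{2*-ε}
  + ∫_{∂Ω} [(x,ν)((Δu)²/2 - f|u|^{2*-ε}/(2*-ε)) + (-∂_νΔu·T(u) + Δu·∂_νT(u))] dσ`. -/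
theorem pohozaev_pucci_serrin_bilaplacian {n : ℕ} (hn : 4 < n)
    (Ω : Set (EuclideanSpace ℝ (Fin n))) (hΩo : IsOpen Ω) (hΩb : Bornology.IsBounded Ω)
    (σ : Measure (EuclideanSpace ℝ (Fin n)))
    (ν : EuclideanSpace ℝ (Fin n) → EuclideanSpace ℝ (Fin n))
    (hν : ∀ x ∈ frontier Ω, ‖ν x‖ = 1)
    (hdiv : ∀ F : EuclideanSpace ℝ (Fin n) → EuclideanSpace ℝ (Fin n), ContDiff ℝ 1 F →
      (∫ x in Ω, ∑ i, (fderiv ℝ F x (EuclideanSpace.single i 1)) i)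
        = ∫ x in frontier Ω, ⟪F x, ν x⟫ ∂σ)
    (u : EuclideanSpace ℝ (Fin n) → ℝ) (hu : ContDiff ℝ 5 u)
    (f : EuclideanSpace ℝ (Fin n) → ℝ) (hf : ContDiff ℝ 1 f)
    (hfc : HasCompactSupport f)
    (ε : ℝ) (hε0 : 0 ≤ ε) (hε1 : ε < twoStar n - 2) :
    ∫ x in Ω, (lap (lap u) x - f x * |u x| ^ (twoStar n - 2 - ε) * u x) * Tfun n u x
      = (↑n * ε / (twoStar n * (twoStar n - ε)))
          * (∫ x in Ω, f x * |u x| ^ (twoStar n - ε))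
        + (1 / (twoStar n - ε)) * (∫ x in Ω, fderiv ℝ f x x * |u x| ^ (twoStar n - ε))
        + ∫ x in frontier Ω,
            (⟪x, ν x⟫ * ((lap u x) ^ 2 / 2
                - f x * |u x| ^ (twoStar n - ε) / (twoStar n - ε))
              + (-(fderiv ℝ (lap u) x (ν x)) * Tfun n u x
                + lap u x * fderiv ℝ (Tfun n u) x (ν x))) ∂σ := by
  classical
  have hn4 : (4:ℝ) < (n:ℝ) := by exact_mod_cast hn
  have hn40 : (0:ℝ) < (n:ℝ) - 4 := by linarith
  have hs2 : 2 < twoStar n := by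
    rw [twoStar, lt_div_iff₀ hn40]; linarith
  have hts : twoStar n * ((n:ℝ) - 4) = 2 * n := by
    rw [twoStar]; field_simp
  have ht0 : twoStar n ≠ 0 := by linarith
  set q : ℝ := twoStar n - ε with hq_def
  have hq2 : 2 < q := by rw [hq_def]; linarith
  have hq1 : 1 < q := by linarith
  have hq0 : q ≠ 0 := by linarith
  have hexp : twoStar n - 2 - ε = q - 2 := by rw [hq_def]; ring
  rw [hexp]
  -- replace Tfun by its coordinate form
  have hTeq : Tfun n u = ppsTu n u := by
    funext x
    rw [Tfun, ppsTu, pps_fderiv_eq_sum u x x]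
  rw [hTeq]
  -- the vector field and its properties
  have hF1 : ContDiff ℝ 1 (ppsF n u f q) := pps_F_smooth hu hf hq1
  have hdivF := hdiv (ppsF n u f q) hF1
  have hproj : (fun x => ∑ i, (fderiv ℝ (ppsF n u f q) x (EuclideanSpace.single i 1)) i)
      = fun x => ∑ i, pd i (fun y => ppsF n u f q y i) x := by
    funext x
    exact Finset.sum_congr rfl fun i _ =>
      (pd_proj ((hF1.differentiable one_ne_zero) x) i (EuclideanSpace.single i 1)).symm
  rw [hproj] at hdivF
  -- pointwise interior identity
  have habs : ∀ x, |u x| ^ (q-2) * u x * u x = |u x| ^ q := by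
    intro x
    rcases eq_or_ne (u x) 0 with h|h
    · rw [h]; simp [Real.zero_rpow hq0]
    · have habs0 : 0 < |u x| := abs_pos.2 h
      calc |u x| ^ (q-2) * u x * u x = |u x| ^ (q-2) * (|u x| * |u x|) := by
            rw [mul_assoc, abs_mul_abs_self]
        _ = |u x| ^ (q-2) * (|u x| ^ (1:ℝ) * |u x| ^ (1:ℝ)) := by rw [Real.rpow_one]
        _ = |u x| ^ q := by
            rw [← Real.rpow_add habs0, ← Real.rpow_add habs0]
            norm_num
  have hcoef : (n:ℝ)/q - (n:ℝ) * ε / (twoStar n * q) = ((n:ℝ)-4)/2 := by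
    have h1 : (n:ℝ)/q - (n:ℝ) * ε / (twoStar n * q) = (n:ℝ)/twoStar n := by
      rw [hq_def]; field_simp; ring
      rw [← sub_mul]; exact mul_inv_cancel₀ hq0
    rw [h1, div_eq_div_iff ht0 (two_ne_zero)]
    linarith [hts]
  have hkey : ∀ x, (lap (lap u) x - f x * |u x| ^ (q - 2) * u x) * ppsTu n u x
      = (∑ i, pd i (fun y => ppsF n u f q y i) x)
        + ((↑n * ε / (twoStar n * q)) * (f x * |u x| ^ q)
          + (1/q) * (fderiv ℝ f x x * |u x| ^ q)) := by
    intro x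
    rw [pps_F_div hu hf hq1 hq0 x, pps_fderiv_eq_sum f x x]
    have hT : ppsTu n u x = (((n:ℝ)-4)/2) * u x + ∑ j, x j * pd j u x := rfl
    rw [hT]
    linear_combination (-(((n:ℝ)-4)/2) * f x) * habs x + (f x * |u x| ^ q) * hcoef
  -- integrability
  have hInt : ∀ g : EuclideanSpace ℝ (Fin n) → ℝ, Continuous g → IntegrableOn g Ω volume :=
    fun g hg => (hg.continuousOn.integrableOn_compact hΩb.isCompact_closure).mono_set
      subset_closure
  have hcw : Continuous (fun x => |u x| ^ q) :=
    (pps_contDiff_abs_rpow (hu.of_le (by norm_num)) hq1).continuous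
  have hIfw : IntegrableOn (fun x => f x * |u x| ^ q) Ω volume :=
    hInt _ (hf.continuous.mul hcw)
  have hcDf : Continuous (fun x => fderiv ℝ f x x) := by
    have h1 : Continuous (fderiv ℝ f) := (contDiff_one_iff_fderiv.1 hf).2
    exact h1.clm_apply continuous_id
  have hIDf : IntegrableOn (fun x => fderiv ℝ f x x * |u x| ^ q) Ω volume :=
    hInt _ (hcDf.mul hcw)
  have hIS : IntegrableOn (fun x => ∑ i, pd i (fun y => ppsF n u f q y i) x) Ω volume := by
    refine hInt _ (continuous_finset_sum _ fun i _ => ?_)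
    have hFi1 : ContDiff ℝ 1 (fun y => ppsF n u f q y i) := by
      exact (EuclideanSpace.proj i :
        EuclideanSpace ℝ (Fin n) →L[ℝ] ℝ).contDiff.comp hF1
    exact contDiff_zero.mp (pps_contDiff_pd (m := 0) i hFi1 (by norm_num))
  -- split the interior integral
  have hL2 : ∫ x in Ω, (lap (lap u) x - f x * |u x| ^ (q - 2) * u x) * ppsTu n u x
      = (∫ x in Ω, ∑ i, pd i (fun y => ppsF n u f q y i) x)
        + ((↑n * ε / (twoStar n * q)) * (∫ x in Ω, f x * |u x| ^ q)
          + (1/q) * (∫ x in Ω, fderiv ℝ f x x * |u x| ^ q)) := by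
    rw [show (fun x => (lap (lap u) x - f x * |u x| ^ (q - 2) * u x) * ppsTu n u x)
        = fun x => (∑ i, pd i (fun y => ppsF n u f q y i) x)
          + ((↑n * ε / (twoStar n * q)) * (f x * |u x| ^ q)
            + (1/q) * (fderiv ℝ f x x * |u x| ^ q)) from funext fun x => hkey x]
    have hg1 : IntegrableOn (fun x => ↑n * ε / (twoStar n * q) * (f x * |u x| ^ q)) Ω volume :=
      hIfw.const_mul _
    have hg2 : IntegrableOn (fun x => 1 / q * (fderiv ℝ f x x * |u x| ^ q)) Ω volume :=
      hIDf.const_mul _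
    have hg12 : IntegrableOn (fun x => ↑n * ε / (twoStar n * q) * (f x * |u x| ^ q)
        + 1 / q * (fderiv ℝ f x x * |u x| ^ q)) Ω volume := hg1.add hg2
    rw [integral_add hIS hg12, integral_add hg1 hg2, integral_const_mul, integral_const_mul]
  -- boundary integrand identity
  have hbnd : ∫ x in frontier Ω,
        (⟪x, ν x⟫ * ((lap u x) ^ 2 / 2 - f x * |u x| ^ q / q)
          + (-(fderiv ℝ (lap u) x (ν x)) * ppsTu n u x
            + lap u x * fderiv ℝ (ppsTu n u) x (ν x))) ∂σ
      = ∫ x in frontier Ω, ⟪ppsF n u f q x, ν x⟫ ∂σ := by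
    refine integral_congr_ae (Filter.Eventually.of_forall fun x => ?_)
    exact (pps_F_inner x (ν x)).symm
  rw [hL2, hdivF, ← hbnd]
  ring
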